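/- arXiv:2012.07625 — 3 statements merged into one kernel-verified Lean document; each statement's English description precedes it below -/
import Mathlib

section
/- Let D > 0, Δ ∈ ℝ, and 0 ≤ λ < 1. If sqrt((D²(D−1)² + Δ²)/(D²(D+1)² + Δ²)) ≤ λ, then D ≤ (1+λ)/(1−λ) and |Δ| ≤ 2(1+λ)/(1−λ)². -/
/-!
Squared, the hypothesis reads `D²(D-1)² + Δ² ≤ λ²(D²(D+1)² + Δ²)`. Since `λ < 1`, the `Δ²` terms
can be dropped, leaving `|D - 1| ≤ λ(D + 1)`, i.e. `D(1-λ) ≤ 1+λ`. Keeping them instead gives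
`(1-λ²)Δ² ≤ D²(λ²(D+1)² - (D-1)²)`; in the variable `x = D(1-λ) ∈ (0, 1+λ]` the right-hand side
times `(1-λ)³` is `x²((1+λ)x - (1-λ)²)(1+λ-x) ≤ 4λ(1+λ)³`, so `Δ²(1-λ)⁴ ≤ 4λ(1+λ)² ≤ (2(1+λ))²`.
-/

namespace ProjectiveDerivative

theorem nonneg_and_le_sq_mul_of_sqrt_div_le {N M l : ℝ} (hM : 0 < M) (h : √(N / M) ≤ l) :
    0 ≤ l ∧ N ≤ l ^ 2 * M := by
  obtain ⟨hl, hNM⟩ := Real.sqrt_le_iff.1 h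
  exact ⟨hl, (div_le_iff₀ hM).1 hNM⟩

variable {D Δ l : ℝ}

theorem mul_one_sub_le_one_add (hD : 0 < D) (hl0 : 0 ≤ l) (hl1 : l < 1)
    (h : D ^ 2 * (D - 1) ^ 2 + Δ ^ 2 ≤ l ^ 2 * (D ^ 2 * (D + 1) ^ 2 + Δ ^ 2)) :
    D * (1 - l) ≤ 1 + l := by
  have hΔ : 0 ≤ (1 - l ^ 2) * Δ ^ 2 := by
    have : l ^ 2 < 1 := by nlinarith
    positivity
  have hsq : (D - 1) ^ 2 ≤ (l * (D + 1)) ^ 2 := by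
    have : D ^ 2 * ((D - 1) ^ 2 - (l * (D + 1)) ^ 2) ≤ 0 := by linear_combination h + hΔ
    nlinarith [pow_pos hD 2]
  have := (abs_le_of_sq_le_sq' hsq (by positivity)).2
  linarith

theorem sq_mul_mul_le {x : ℝ} (hl : 0 ≤ l) (hx0 : 0 ≤ x) (hx : x ≤ 1 + l) :
    x ^ 2 * ((1 + l) * x - (1 - l) ^ 2) * (1 + l - x) ≤ 4 * l * (1 + l) ^ 3 := by
  have hfirst : (1 + l) * x - (1 - l) ^ 2 ≤ 4 * l := by nlinarith
  have hrest : x ^ 2 * (1 + l - x) ≤ (1 + l) ^ 3 := by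
    calc x ^ 2 * (1 + l - x) ≤ (1 + l) ^ 2 * (1 + l) := by gcongr; linarith
      _ = (1 + l) ^ 3 := by ring
  calc x ^ 2 * ((1 + l) * x - (1 - l) ^ 2) * (1 + l - x)
      = ((1 + l) * x - (1 - l) ^ 2) * (x ^ 2 * (1 + l - x)) := by ring
    _ ≤ 4 * l * (1 + l) ^ 3 :=
        mul_le_mul hfirst hrest (mul_nonneg (sq_nonneg x) (by linarith)) (by positivity)

theorem sq_mul_one_sub_pow_four_le (hD : 0 < D) (hl0 : 0 ≤ l) (hl1 : l < 1)
    (h : D ^ 2 * (D - 1) ^ 2 + Δ ^ 2 ≤ l ^ 2 * (D ^ 2 * (D + 1) ^ 2 + Δ ^ 2)) :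
    Δ ^ 2 * (1 - l) ^ 4 ≤ 4 * l * (1 + l) ^ 2 := by
  have hx := sq_mul_mul_le hl0 (by nlinarith : 0 ≤ D * (1 - l))
    (mul_one_sub_le_one_add hD hl0 hl1 h)
  have hcube : 0 ≤ (1 - l) ^ 3 := pow_nonneg (by linarith) 3
  have : Δ ^ 2 * (1 - l) ^ 4 * (1 + l) ≤ 4 * l * (1 + l) ^ 2 * (1 + l) := by
    calc Δ ^ 2 * (1 - l) ^ 4 * (1 + l)
        = (1 - l) ^ 3 * ((1 - l ^ 2) * Δ ^ 2) := by ring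
      _ ≤ (1 - l) ^ 3 * (D ^ 2 * (l ^ 2 * (D + 1) ^ 2 - (D - 1) ^ 2)) :=
          mul_le_mul_of_nonneg_left (by linear_combination h) hcube
      _ = (D * (1 - l)) ^ 2 * ((1 + l) * (D * (1 - l)) - (1 - l) ^ 2) * (1 + l - D * (1 - l)) := by
          ring
      _ ≤ 4 * l * (1 + l) ^ 2 * (1 + l) := by linarith
  exact le_of_mul_le_mul_right this (by linarith)

end ProjectiveDerivative

open ProjectiveDerivative in
theorem derivative_bounds_general (D Δ lam : ℝ) (hD : 0 < D) (hlam1 : lam < 1)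
    (h : Real.sqrt ((D ^ 2 * (D - 1) ^ 2 + Δ ^ 2) / (D ^ 2 * (D + 1) ^ 2 + Δ ^ 2)) ≤ lam) :
    D ≤ (1 + lam) / (1 - lam) ∧ |Δ| ≤ 2 * (1 + lam) / (1 - lam) ^ 2 := by
  obtain ⟨hlam0, hsq⟩ := nonneg_and_le_sq_mul_of_sqrt_div_le (by positivity) h
  have hu : 0 < 1 - lam := by linarith
  refine ⟨(le_div_iff₀ hu).2 (mul_one_sub_le_one_add hD hlam0 hlam1 hsq), ?_⟩
  rw [le_div_iff₀ (by positivity)]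
  have hΔ : (Δ * (1 - lam) ^ 2) ^ 2 ≤ (2 * (1 + lam)) ^ 2 := by
    nlinarith [sq_mul_one_sub_pow_four_le hD hlam0 hlam1 hsq]
  simpa [abs_mul, abs_of_pos hu] using abs_le_of_sq_le_sq hΔ (by linarith)

/-- if the modulus `r` of the parameter of the projective derivative is
bounded by `λ < 1`, then `D ≤ (1+λ)/(1-λ)` and `|Δ| ≤ 2(1+λ)/(1-λ)²`. -/
theorem derivative_bounds (D Δ lam : ℝ) (hD : 0 < D) (hlam0 : 0 ≤ lam) (hlam1 : lam < 1)
    (h : Real.sqrt ((D ^ 2 * (D - 1) ^ 2 + Δ ^ 2) / (D ^ 2 * (D + 1) ^ 2 + Δ ^ 2)) ≤ lam) :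
    D ≤ (1 + lam) / (1 - lam) ∧ |Δ| ≤ 2 * (1 + lam) / (1 - lam) ^ 2 :=
  derivative_bounds_general D Δ lam hD hlam1 h
end

section
/- Let f be a C² function with Df > 0. For distinct θ₁ < θ₂ < θ₃ converging to θ with ε = (θ₃−θ₁)/2 → 0, define ρ_ε² = (|e^{if(θ₃)} − e^{if(θ₂)}|²/|e^{iθ₃} − e^{iθ₂}|²)·(|e^{iθ₂} − e^{iθ₁}|²/|e^{if(θ₂)} − e^{if(θ₁)}|²). Then (1 − ρ_ε)/ε → −D²f(θ)/Df(θ). -/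
/-!
Since `|e^{ix} - e^{iy}| = 2|sin((x - y)/2)|` and `sin x = x · sinc x`, the quantity `ρ` factors
as `|(s₂ / s₁) · T|`, where `s₁`, `s₂` are the slopes of `f` on `[θ₁, θ₂]` and `[θ₂, θ₃]` and `T`
is a ratio of four values of `sinc` at arguments of size `O(ε)`; as `sinc x = 1 + O(x²)`,
`T = 1 + o(ε)`. The slope of `f` over an interval is `Df` at its midpoint up to `o(length)`, and
the two midpoints are exactly `ε` apart, so `s₂ - s₁ = D²f(θ) ε + o(ε)` and hence
`s₂ / s₁ = 1 + (D²f(θ) / Df(θ)) ε + o(ε)`.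
-/

open Filter Topology Asymptotics Set

namespace Real

lemma mul_sinc (x : ℝ) : x * sinc x = sin x := by
  rcases eq_or_ne x 0 with rfl | hx
  · simp
  · rw [sinc_of_ne_zero hx, mul_div_cancel₀ _ hx]

lemma sin_div_sin (x y : ℝ) : sin x / sin y = x / y * (sinc x / sinc y) := by
  rw [← mul_sinc x, ← mul_sinc y, mul_div_mul_comm]

lemma abs_sinc_sub_one_le (x : ℝ) : |sinc x - 1| ≤ x ^ 2 / 6 := by
  rcases eq_or_ne x 0 with rfl | hx
  · simp
  · rw [sinc_of_ne_zero hx, div_sub_one hx, abs_div, abs_sub_comm, div_le_iff₀ (abs_pos.2 hx)]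
    calc |x - sin x| ≤ |x| ^ 3 / 6 := abs_sub_sin_le x
      _ = x ^ 2 / 6 * |x| := by rw [pow_succ, sq_abs]; ring

end Real

namespace Complex

lemma norm_exp_ofReal_mul_I_sub_exp_ofReal_mul_I (x y : ℝ) :
    ‖exp (x * I) - exp (y * I)‖ = 2 * |Real.sin ((x - y) / 2)| := by
  have h : exp (x * I) - exp (y * I) = exp (y * I) * (exp (I * ↑(x - y)) - 1) := by
    rw [mul_sub, ← exp_add]
    push_cast
    ring_nf
  rw [h, norm_mul, norm_exp_ofReal_mul_I, one_mul, norm_exp_I_mul_ofReal_sub_one, norm_mul,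
    Real.norm_eq_abs]
  simp

end Complex

lemma sqrt_two_mul_abs_sq_div_mul (p q r s : ℝ) :
    √((2 * |p|) ^ 2 / (2 * |q|) ^ 2 * ((2 * |r|) ^ 2 / (2 * |s|) ^ 2)) = |p / q * (r / s)| := by
  simp only [mul_pow, sq_abs, mul_div_mul_left _ _ (pow_ne_zero 2 (two_ne_zero' ℝ)), ← div_pow]
  rw [← mul_pow, Real.sqrt_sq_eq_abs]

lemma half_sub_div_half_sub (f : ℝ → ℝ) (a b : ℝ) :
    (f b - f a) / 2 / ((b - a) / 2) = slope f a b := by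
  rw [div_div_div_cancel_right₀ (two_ne_zero' ℝ), slope_def_field]

open Real in
lemma sqrt_chord_ratio_eq (f : ℝ → ℝ) (a b c : ℝ) :
    √((‖Complex.exp (f c * Complex.I) - Complex.exp (f b * Complex.I)‖ ^ 2 /
          ‖Complex.exp (c * Complex.I) - Complex.exp (b * Complex.I)‖ ^ 2) *
        (‖Complex.exp (b * Complex.I) - Complex.exp (a * Complex.I)‖ ^ 2 /
          ‖Complex.exp (f b * Complex.I) - Complex.exp (f a * Complex.I)‖ ^ 2)) =
      |slope f b c / slope f a b *
        (sinc ((f c - f b) / 2) / sinc ((c - b) / 2) *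
          (sinc ((b - a) / 2) / sinc ((f b - f a) / 2)))| := by
  simp only [Complex.norm_exp_ofReal_mul_I_sub_exp_ofReal_mul_I]
  rw [sqrt_two_mul_abs_sq_div_mul, sin_div_sin, sin_div_sin, half_sub_div_half_sub,
    ← inv_div ((f b - f a) / 2), half_sub_div_half_sub, div_eq_mul_inv (slope f b c)]
  congr 1
  ring

lemma abs_slope_sub_deriv_midpoint_le {f : ℝ → ℝ} (hf : Differentiable ℝ f) {u v C K : ℝ}
    (huv : u < v)
    (h : ∀ x ∈ Icc u v, |deriv f x - deriv f ((u + v) / 2) - C * (x - (u + v) / 2)| ≤ K) :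
    |slope f u v - deriv f ((u + v) / 2)| ≤ K := by
  set m := (u + v) / 2 with hm
  have hg : ∀ x ∈ Icc u v, HasDerivWithinAt (fun x => f x - deriv f m * x - C * (x - m) ^ 2 / 2)
      (deriv f x - deriv f m - C * (x - m)) (Icc u v) x := fun x _ => by
    have := ((hf x).hasDerivAt.sub ((hasDerivAt_id x).const_mul (deriv f m))).sub
      ((((hasDerivAt_id x).sub_const m).pow 2).const_mul C |>.div_const 2)
    exact (this.congr_deriv (by simp only [id]; ring)).hasDerivWithinAt
  have hmvt := (convex_Icc u v).norm_image_sub_le_of_norm_hasDerivWithin_le hg h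
    (left_mem_Icc.2 huv.le) (right_mem_Icc.2 huv.le)
  have hvu : 0 < v - u := sub_pos.2 huv
  -- the quadratic correction takes equal values at `u` and `v`, whose midpoint is `m`
  rw [Real.norm_eq_abs, Real.norm_eq_abs, abs_of_pos hvu,
    show (v - m) ^ 2 = (u - m) ^ 2 by rw [hm]; ring] at hmvt
  rw [slope_def_field, div_sub' hvu.ne', abs_div, abs_of_pos hvu, div_le_iff₀ hvu]
  exact (le_of_eq (by congr 1; ring)).trans hmvt

section Asymptotics

variable {ι : Type*} {l : Filter ι}

lemma isLittleO_slope_sub_deriv_midpoint {f : ℝ → ℝ} {f₂ θ : ℝ} (hf : Differentiable ℝ f)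
    (hf₂ : HasStrictDerivAt (deriv f) f₂ θ) {u v : ι → ℝ} (hu : Tendsto u l (𝓝 θ))
    (hv : Tendsto v l (𝓝 θ)) (huv : ∀ n, u n < v n) :
    (fun n => slope f (u n) (v n) - deriv f ((u n + v n) / 2)) =o[l] fun n => v n - u n := by
  refine IsLittleO.of_bound fun δ hδ => ?_
  have hstrict := (hasDerivAtFilter_iff_isLittleO.1 hf₂).def hδ
  rw [nhds_prod_eq] at hstrict
  obtain ⟨t, ht, hts⟩ := mem_prod_self_iff.1 hstrict
  filter_upwards [(hu.Icc hv).eventually (eventually_smallSets_subset.2 ht)] with n hn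
  have hvu : 0 < v n - u n := sub_pos.2 (huv n)
  refine (abs_slope_sub_deriv_midpoint_le hf (C := f₂) (K := δ * ((v n - u n) / 2)) (huv n)
    fun x hx => ?_).trans ?_
  · have hm : (u n + v n) / 2 ∈ Icc (u n) (v n) := ⟨by linarith, by linarith⟩
    have hxm : |x - (u n + v n) / 2| ≤ (v n - u n) / 2 :=
      abs_le.2 ⟨by linarith [hx.1], by linarith [hx.2]⟩
    have := hts (mk_mem_prod (hn hx) (hn hm))
    simp only [mem_ofPred_eq, smul_eq_mul, Real.norm_eq_abs] at this
    rw [mul_comm f₂]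
    exact this.trans (mul_le_mul_of_nonneg_left hxm hδ.le)
  · rw [Real.norm_eq_abs, abs_of_pos hvu]
    linarith [mul_pos hδ hvu]

lemma HasStrictDerivAt.tendsto_slope {f : ℝ → ℝ} {f₁ θ : ℝ} (hf : HasStrictDerivAt f f₁ θ)
    {u v : ι → ℝ} (hu : Tendsto u l (𝓝 θ)) (hv : Tendsto v l (𝓝 θ)) (huv : ∀ n, u n ≠ v n) :
    Tendsto (fun n => slope f (u n) (v n)) l (𝓝 f₁) := by
  have h := ((hasDerivAtFilter_iff_isLittleO.1 hf).comp_tendsto (hv.prodMk_nhds hu))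
  have h' := h.tendsto_div_nhds_zero.add_const f₁
  rw [zero_add] at h'
  refine h'.congr fun n => ?_
  have hvu : v n - u n ≠ 0 := sub_ne_zero.2 (huv n).symm
  simp only [Function.comp_apply, smul_eq_mul, slope_def_field]
  field_simp
  ring

lemma isLittleO_slope_sub_slope {f : ℝ → ℝ} {f₂ θ : ℝ} (hf : Differentiable ℝ f)
    (hf₂ : HasStrictDerivAt (deriv f) f₂ θ) {a b c : ι → ℝ} (ha : Tendsto a l (𝓝 θ))
    (hc : Tendsto c l (𝓝 θ)) (hab : ∀ n, a n < b n) (hbc : ∀ n, b n < c n) :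
    (fun n => slope f (b n) (c n) - slope f (a n) (b n) - f₂ * ((c n - a n) / 2)) =o[l]
      fun n => (c n - a n) / 2 := by
  have hb : Tendsto b l (𝓝 θ) :=
    tendsto_of_tendsto_of_tendsto_of_le_of_le ha hc (fun n => (hab n).le) (fun n => (hbc n).le)
  have hsub : ∀ {u v : ι → ℝ}, (∀ n, a n ≤ u n) → (∀ n, u n ≤ v n) → (∀ n, v n ≤ c n) →
      (fun n => v n - u n) =O[l] fun n => (c n - a n) / 2 := fun hau huv hvc =>
    IsBigO.of_bound 2 (Eventually.of_forall fun n => by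
      rw [Real.norm_eq_abs, Real.norm_eq_abs, abs_of_nonneg (sub_nonneg.2 (huv n)),
        abs_of_nonneg (by linarith [hau n, huv n, hvc n])]
      linarith [hau n, hvc n])
  have h₁ := (isLittleO_slope_sub_deriv_midpoint hf hf₂ ha hb hab).trans_isBigO
    (hsub (fun n => le_rfl) (fun n => (hab n).le) (fun n => (hbc n).le))
  have h₂ := (isLittleO_slope_sub_deriv_midpoint hf hf₂ hb hc hbc).trans_isBigO
    (hsub (fun n => (hab n).le) (fun n => (hbc n).le) (fun n => le_rfl))
  have hm : Tendsto (fun n => ((b n + c n) / 2, (a n + b n) / 2)) l (𝓝 (θ, θ)) := by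
    simpa only [add_self_div_two] using
      ((hb.add hc).div_const 2).prodMk_nhds ((ha.add hb).div_const 2)
  -- the two midpoints are exactly `(c - a) / 2` apart
  have h₃ : (fun n => deriv f ((b n + c n) / 2) - deriv f ((a n + b n) / 2) -
      f₂ * ((c n - a n) / 2)) =o[l] fun n => (c n - a n) / 2 :=
    ((hasDerivAtFilter_iff_isLittleO.1 hf₂).comp_tendsto hm).congr
      (fun n => by simp only [Function.comp_apply, smul_eq_mul]; ring)
      (fun n => by simp only [Function.comp_apply]; ring)
  exact ((h₂.sub h₁).add h₃).congr (fun n => by ring) (fun n => rfl)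

lemma tendsto_one_sub_div_div {s₁ s₂ ε : ι → ℝ} {a b : ℝ}
    (h : (fun n => s₂ n - s₁ n - b * ε n) =o[l] ε) (hs₁ : Tendsto s₁ l (𝓝 a)) (ha : a ≠ 0)
    (hε : ∀ n, ε n ≠ 0) : Tendsto (fun n => (1 - s₂ n / s₁ n) / ε n) l (𝓝 (-b / a)) := by
  have hd : Tendsto (fun n => (s₂ n - s₁ n) / ε n) l (𝓝 b) := by
    have h' := h.tendsto_div_nhds_zero.add_const b
    rw [zero_add] at h'
    refine h'.congr fun n => ?_
    field_simp [hε n]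
    ring
  rw [neg_div]
  refine (hd.div hs₁ ha).neg.congr' ?_
  filter_upwards [hs₁.eventually_ne ha] with n hn
  dsimp only [Pi.div_apply]
  field_simp [hε n]
  ring

lemma isLittleO_sinc_sub_one {x ε : ι → ℝ} (hx : x =O[l] ε) (hε : Tendsto ε l (𝓝 0)) :
    (fun n => Real.sinc (x n) - 1) =o[l] ε := by
  have h₁ : (fun n => Real.sinc (x n) - 1) =O[l] fun n => x n * x n :=
    IsBigO.of_bound (1 / 6) (Eventually.of_forall fun n => by
      rw [Real.norm_eq_abs, Real.norm_eq_abs, abs_mul_self, ← sq]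
      linarith [Real.abs_sinc_sub_one_le (x n)])
  have h₂ := hx.mul_isLittleO ((isLittleO_one_iff ℝ).2 (hx.trans_tendsto hε))
  simp only [mul_one] at h₂
  exact h₁.trans_isLittleO h₂

section OneAddLittleO

variable {u v ε : ι → ℝ}

lemma tendsto_one_of_isLittleO_sub_one (hu : (fun n => u n - 1) =o[l] ε)
    (hε : Tendsto ε l (𝓝 0)) : Tendsto u l (𝓝 1) := by
  simpa using (hu.trans_tendsto hε).add_const 1

lemma isLittleO_mul_sub_one (hu : (fun n => u n - 1) =o[l] ε) (hv : (fun n => v n - 1) =o[l] ε)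
    (hε : Tendsto ε l (𝓝 0)) : (fun n => u n * v n - 1) =o[l] ε := by
  have h := ((tendsto_one_of_isLittleO_sub_one hu hε).isBigO_one ℝ).mul_isLittleO hv
  simp only [one_mul] at h
  exact (h.add hu).congr (fun n => by ring) (fun n => rfl)

lemma isLittleO_inv_sub_one (hu : (fun n => u n - 1) =o[l] ε) (hε : Tendsto ε l (𝓝 0)) :
    (fun n => (u n)⁻¹ - 1) =o[l] ε := by
  have hu₁ := tendsto_one_of_isLittleO_sub_one hu hε
  have h := ((hu₁.inv₀ one_ne_zero).isBigO_one ℝ).mul_isLittleO hu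
  simp only [one_mul] at h
  refine h.neg_left.congr' ?_ EventuallyEq.rfl
  filter_upwards [hu₁.eventually_ne one_ne_zero] with n hn
  simp only [mul_sub, inv_mul_cancel₀ hn]
  ring

lemma isLittleO_div_sub_one (hu : (fun n => u n - 1) =o[l] ε) (hv : (fun n => v n - 1) =o[l] ε)
    (hε : Tendsto ε l (𝓝 0)) : (fun n => u n / v n - 1) =o[l] ε := by
  simpa only [div_eq_mul_inv] using isLittleO_mul_sub_one hu (isLittleO_inv_sub_one hv hε) hε

end OneAddLittleO

lemma isLittleO_sinc_ratio_sub_one {f : ℝ → ℝ} {f₁ θ : ℝ} (hf : HasStrictDerivAt f f₁ θ)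
    {a b c : ι → ℝ} (ha : Tendsto a l (𝓝 θ)) (hc : Tendsto c l (𝓝 θ)) (hab : ∀ n, a n < b n)
    (hbc : ∀ n, b n < c n) :
    (fun n => Real.sinc ((f (c n) - f (b n)) / 2) / Real.sinc ((c n - b n) / 2) *
        (Real.sinc ((b n - a n) / 2) / Real.sinc ((f (b n) - f (a n)) / 2)) - 1) =o[l]
      fun n => (c n - a n) / 2 := by
  have hb : Tendsto b l (𝓝 θ) :=
    tendsto_of_tendsto_of_tendsto_of_le_of_le ha hc (fun n => (hab n).le) (fun n => (hbc n).le)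
  have hε : Tendsto (fun n => (c n - a n) / 2) l (𝓝 0) := by
    simpa using (hc.sub ha).div_const 2
  have hhalf : ∀ {u v : ι → ℝ}, (∀ n, a n ≤ u n) → (∀ n, u n ≤ v n) → (∀ n, v n ≤ c n) →
      (fun n => (v n - u n) / 2) =O[l] fun n => (c n - a n) / 2 := fun hau huv hvc =>
    IsBigO.of_bound 1 (Eventually.of_forall fun n => by
      rw [Real.norm_eq_abs, Real.norm_eq_abs, abs_of_nonneg (by linarith [huv n]),
        abs_of_nonneg (by linarith [hau n, huv n, hvc n])]
      linarith [hau n, hvc n])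
  have himage : ∀ {u v : ι → ℝ}, Tendsto u l (𝓝 θ) → Tendsto v l (𝓝 θ) → (∀ n, u n < v n) →
      (fun n => (v n - u n) / 2) =O[l] (fun n => (c n - a n) / 2) →
      (fun n => (f (v n) - f (u n)) / 2) =O[l] fun n => (c n - a n) / 2 := fun hu hv huv h => by
    have h' := ((hf.tendsto_slope hu hv fun n => (huv n).ne).isBigO_one ℝ).mul h
    simp only [one_mul] at h'
    refine h'.congr (fun n => ?_) (fun n => rfl)
    rw [slope_def_field]
    field_simp [sub_ne_zero.2 (huv n).ne']
  have hA := hhalf (fun n => le_rfl) (fun n => (hab n).le) (fun n => (hbc n).le)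
  have hB := hhalf (fun n => (hab n).le) (fun n => (hbc n).le) (fun n => le_rfl)
  exact isLittleO_mul_sub_one
    (isLittleO_div_sub_one (isLittleO_sinc_sub_one (himage hb hc hbc hB) hε)
      (isLittleO_sinc_sub_one hB hε) hε)
    (isLittleO_div_sub_one (isLittleO_sinc_sub_one hA hε)
      (isLittleO_sinc_sub_one (himage ha hb hab hA) hε) hε) hε

lemma tendsto_one_sub_abs_mul_div {q T ε : ι → ℝ} {L : ℝ}
    (hq : Tendsto (fun n => (1 - q n) / ε n) l (𝓝 L)) (hq₁ : Tendsto q l (𝓝 1))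
    (hT : (fun n => T n - 1) =o[l] ε) (hε : Tendsto ε l (𝓝 0)) :
    Tendsto (fun n => (1 - |q n * T n|) / ε n) l (𝓝 L) := by
  have hT₁ := tendsto_one_of_isLittleO_sub_one hT hε
  have h := (hq.mul hT₁).sub hT.tendsto_div_nhds_zero
  rw [mul_one, sub_zero] at h
  refine h.congr' ?_
  have hqT : Tendsto (fun n => q n * T n) l (𝓝 1) := by simpa using hq₁.mul hT₁
  filter_upwards [hqT.eventually (lt_mem_nhds zero_lt_one)] with n hn
  rw [abs_of_pos hn]
  ring

end Asymptotics

theorem rho_limit_general (f : ℝ → ℝ) (hf : ContDiff ℝ 2 f) (hf' : ∀ x, 0 < deriv f x)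
    (θ : ℝ) (t₁ t₂ t₃ : ℕ → ℝ)
    (hord : ∀ n, t₁ n < t₂ n ∧ t₂ n < t₃ n)
    (h1 : Tendsto t₁ atTop (nhds θ)) (h3 : Tendsto t₃ atTop (nhds θ))
    (ρ : ℕ → ℝ)
    (hρ : ∀ n, ρ n = Real.sqrt
      ((‖Complex.exp (f (t₃ n) * Complex.I) - Complex.exp (f (t₂ n) * Complex.I)‖ ^ 2 /
          ‖Complex.exp (t₃ n * Complex.I) - Complex.exp (t₂ n * Complex.I)‖ ^ 2) *
        (‖Complex.exp (t₂ n * Complex.I) - Complex.exp (t₁ n * Complex.I)‖ ^ 2 /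
          ‖Complex.exp (f (t₂ n) * Complex.I) - Complex.exp (f (t₁ n) * Complex.I)‖ ^ 2))) :
    Tendsto (fun n => (1 - ρ n) / ((t₃ n - t₁ n) / 2))
      atTop (nhds (-(deriv (deriv f) θ) / deriv f θ)) := by
  have hab n := (hord n).1
  have hbc n := (hord n).2
  have hf₁ : HasStrictDerivAt f (deriv f θ) θ := hf.contDiffAt.hasStrictDerivAt two_ne_zero
  have hf₂ : HasStrictDerivAt (deriv f) (deriv (deriv f) θ) θ :=
    (ContDiff.deriv' (n := 1) hf).contDiffAt.hasStrictDerivAt one_ne_zero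
  have h2 : Tendsto t₂ atTop (𝓝 θ) :=
    tendsto_of_tendsto_of_tendsto_of_le_of_le h1 h3 (fun n => (hab n).le) (fun n => (hbc n).le)
  have hε : Tendsto (fun n => (t₃ n - t₁ n) / 2) atTop (𝓝 0) := by
    simpa using (h3.sub h1).div_const 2
  have hs₁ := hf₁.tendsto_slope h1 h2 fun n => (hab n).ne
  have hs₂ := hf₁.tendsto_slope h2 h3 fun n => (hbc n).ne
  have hq := tendsto_one_sub_div_div
    (isLittleO_slope_sub_slope (hf.differentiable two_ne_zero) hf₂ h1 h3 hab hbc) hs₁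
    (hf' θ).ne' fun n => by linarith [hab n, hbc n]
  have hq₁ : Tendsto (fun n => slope f (t₂ n) (t₃ n) / slope f (t₁ n) (t₂ n)) atTop (𝓝 1) := by
    have h := hs₂.div hs₁ (hf' θ).ne'
    rwa [div_self (hf' θ).ne'] at h
  simp only [hρ, sqrt_chord_ratio_eq]
  exact tendsto_one_sub_abs_mul_div hq hq₁ (isLittleO_sinc_ratio_sub_one hf₁ h1 h3 hab hbc) hε

/-- for a lift `f` of a C² circle diffeomorphism and triples
`θ₁ < θ₂ < θ₃` converging to `θ`, with `ε = (θ₃-θ₁)/2` and `ρ_ε` the modulus of the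
cross-ratio-type quantity `τ`, one has `(1-ρ_ε)/ε → -D²f(θ)/Df(θ)`. -/
theorem rho_limit (f : ℝ → ℝ) (hf : ContDiff ℝ 2 f) (hf' : ∀ x, 0 < deriv f x)
    (hper : ∀ x, f (x + 2 * Real.pi) = f x + 2 * Real.pi)
    (θ : ℝ) (t₁ t₂ t₃ : ℕ → ℝ)
    (hord : ∀ n, t₁ n < t₂ n ∧ t₂ n < t₃ n) (hsp : ∀ n, t₃ n - t₁ n < 2 * Real.pi)
    (h1 : Tendsto t₁ atTop (nhds θ)) (h3 : Tendsto t₃ atTop (nhds θ))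
    (ρ : ℕ → ℝ)
    (hρ : ∀ n, ρ n = Real.sqrt
      ((‖Complex.exp (f (t₃ n) * Complex.I) - Complex.exp (f (t₂ n) * Complex.I)‖ ^ 2 /
          ‖Complex.exp (t₃ n * Complex.I) - Complex.exp (t₂ n * Complex.I)‖ ^ 2) *
        (‖Complex.exp (t₂ n * Complex.I) - Complex.exp (t₁ n * Complex.I)‖ ^ 2 /
          ‖Complex.exp (f (t₂ n) * Complex.I) - Complex.exp (f (t₁ n) * Complex.I)‖ ^ 2))) :
    Tendsto (fun n => (1 - ρ n) / ((t₃ n - t₁ n) / 2))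
      atTop (nhds (-(deriv (deriv f) θ) / deriv f θ)) :=
  rho_limit_general f hf hf' θ t₁ t₂ t₃ hord h1 h3 ρ hρ
end

section
/- Continuity of the enlarged projective cocycle on the diagonal: if f is a C² circle diffeomorphism, then as three distinct cyclically ordered points θ₁, θ₂, θ₃ all converge to θ, the modulus |σ_{(θ₁,θ₂,θ₃)}| of the parameter of the interpolating Möbius map M_{f,(θ₁,θ₂,θ₃)} converges to sqrt((Df(θ)²(Df(θ)−1)² + D²f(θ)²)/(Df(θ)²(Df(θ)+1)² + D²f(θ)²)), the modulus of the parameter of the projective derivative P_{f,θ}. -/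
/-!
Put `g s = exp (s i)` and `F s = exp (f s i)`. In divided differences the ratio is
`τ = g[x,y] F[y,z] / (F[x,y] g[y,z])`, so `τ - 1 = (z - x) D` with `D` built from first and
second divided differences, and `σ̄ = D / (g z D + g[x,z])`. First divided differences tend to
first derivatives and second ones to half the second derivative (the mean value inequality
applied to the second-order Taylor remainder), so `σ̄` tends to an explicit expression in
`f'(θ)` and `f''(θ)`, whose modulus is the claimed one.
-/

open Filter Topology Set

section Secant

variable {E : Type*} [NormedAddCommGroup E] [NormedSpace ℝ E] {h h' h'' : ℝ → E}

theorem norm_sub_sub_smul_le_of_norm_deriv_sub_le {s : Set ℝ} (hs : Convex ℝ s)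
    (hh : ∀ u ∈ s, HasDerivAt h (h' u) u) {v : E} {C : ℝ} (bound : ∀ u ∈ s, ‖h' u - v‖ ≤ C)
    {a b : ℝ} (ha : a ∈ s) (hb : b ∈ s) : ‖h b - h a - (b - a) • v‖ ≤ C * |b - a| := by
  have hψ : ∀ u ∈ s, HasDerivWithinAt (fun u => h u - u • v) (h' u - v) s u := fun u hu =>
    ((hh u hu).sub (by simpa using (hasDerivAt_id u).smul_const v)).hasDerivWithinAt
  have := hs.norm_image_sub_le_of_norm_hasDerivWithin_le hψ bound ha hb
  rw [Real.norm_eq_abs] at this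
  convert this using 2
  rw [sub_smul]; abel

theorem norm_slope_sub_le_of_norm_deriv_sub_le {s : Set ℝ} (hs : Convex ℝ s)
    (hh : ∀ u ∈ s, HasDerivAt h (h' u) u) {v : E} {C : ℝ} (bound : ∀ u ∈ s, ‖h' u - v‖ ≤ C)
    {a b : ℝ} (ha : a ∈ s) (hb : b ∈ s) (hab : a ≠ b) : ‖slope h a b - v‖ ≤ C := by
  have hba : b - a ≠ 0 := sub_ne_zero.2 hab.symm
  have key : slope h a b - v = (b - a)⁻¹ • (h b - h a - (b - a) • v) := by
    rw [slope_def_module, smul_sub _ (h b - h a), smul_smul, inv_mul_cancel₀ hba, one_smul]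
  rw [key, norm_smul, Real.norm_eq_abs, abs_inv, inv_mul_le_iff₀ (abs_pos.2 hba), mul_comm]
  exact norm_sub_sub_smul_le_of_norm_deriv_sub_le hs hh bound ha hb

theorem tendsto_slope_of_continuousAt_deriv (hh : ∀ u, HasDerivAt h (h' u) u) {θ : ℝ}
    (hc : ContinuousAt h' θ) {ι : Type*} {l : Filter ι} {x y : ι → ℝ} (hxy : ∀ i, x i ≠ y i)
    (hx : Tendsto x l (𝓝 θ)) (hy : Tendsto y l (𝓝 θ)) :
    Tendsto (fun i => slope h (x i) (y i)) l (𝓝 (h' θ)) := by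
  rw [Metric.tendsto_nhds]
  intro ε hε
  obtain ⟨δ, hδ, hδε⟩ := Metric.continuousAt_iff.1 hc (ε / 2) (half_pos hε)
  have bound : ∀ u ∈ Metric.ball θ δ, ‖h' u - h' θ‖ ≤ ε / 2 := fun u hu => by
    simpa [dist_eq_norm] using (hδε hu).le
  filter_upwards [hx (Metric.ball_mem_nhds θ hδ), hy (Metric.ball_mem_nhds θ hδ)] with i hxi hyi
  rw [dist_eq_norm]
  exact (norm_slope_sub_le_of_norm_deriv_sub_le (convex_ball θ δ) (fun u _ => hh u) bound
    hxi hyi (hxy i)).trans_lt (half_lt_self hε)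

theorem norm_taylor_remainder_two_le {s : Set ℝ} (hs : Convex ℝ s)
    (hh : ∀ u ∈ s, HasDerivAt h (h' u) u) (hh' : ∀ u ∈ s, HasDerivAt h' (h'' u) u) {w : E}
    {C : ℝ} (bound : ∀ u ∈ s, ‖h'' u - w‖ ≤ C) {a b : ℝ} (ha : a ∈ s) (hb : b ∈ s) :
    ‖h b - h a - (b - a) • h' a - ((b - a) ^ 2 / 2) • w‖ ≤ C * (b - a) ^ 2 := by
  have hseg : uIcc a b ⊆ s := by simpa [segment_eq_uIcc] using hs.segment_subset ha hb
  have hψ : ∀ u ∈ uIcc a b, HasDerivAt (fun u => h u - ((u - a) ^ 2 / 2) • w)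
      (h' u - (u - a) • w) u := fun u hu => by
    have hq : HasDerivAt (fun u : ℝ => (u - a) ^ 2 / 2) (u - a) u := by
      refine ((((hasDerivAt_id u).sub_const a).pow 2).div_const 2).congr_deriv ?_
      simp
    exact (hh u (hseg hu)).sub (hq.smul_const w)
  have bound' : ∀ u ∈ uIcc a b, ‖h' u - (u - a) • w - h' a‖ ≤ C * |b - a| := fun u hu => by
    have := norm_sub_sub_smul_le_of_norm_deriv_sub_le hs hh' bound ha (hseg hu)
    calc ‖h' u - (u - a) • w - h' a‖ = ‖h' u - h' a - (u - a) • w‖ := by congr 1; abel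
      _ ≤ C * |u - a| := this
      _ ≤ C * |b - a| := mul_le_mul_of_nonneg_left (abs_sub_left_of_mem_uIcc hu)
        ((norm_nonneg _).trans (bound a ha))
  have := norm_sub_sub_smul_le_of_norm_deriv_sub_le (convex_uIcc a b) hψ bound' left_mem_uIcc
    right_mem_uIcc
  calc _ = _ := by congr 1; norm_num; abel
    _ ≤ _ := this
    _ = C * (b - a) ^ 2 := by rw [mul_assoc, abs_mul_abs_self, sq]

theorem norm_slope_sub_taylor_le {s : Set ℝ} (hs : Convex ℝ s)
    (hh : ∀ u ∈ s, HasDerivAt h (h' u) u) (hh' : ∀ u ∈ s, HasDerivAt h' (h'' u) u) {w : E}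
    {C : ℝ} (bound : ∀ u ∈ s, ‖h'' u - w‖ ≤ C) {a b : ℝ} (ha : a ∈ s) (hb : b ∈ s)
    (hab : a ≠ b) : ‖slope h a b - h' a - ((b - a) / 2) • w‖ ≤ C * |b - a| := by
  have hba : b - a ≠ 0 := sub_ne_zero.2 hab.symm
  have key : slope h a b - h' a - ((b - a) / 2) • w
      = (b - a)⁻¹ • (h b - h a - (b - a) • h' a - ((b - a) ^ 2 / 2) • w) := by
    rw [slope_def_module]
    match_scalars <;> field_simp
  rw [key, norm_smul, Real.norm_eq_abs, abs_inv, inv_mul_le_iff₀ (abs_pos.2 hba)]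
  calc _ ≤ C * (b - a) ^ 2 := norm_taylor_remainder_two_le hs hh hh' bound ha hb
    _ = |b - a| * (C * |b - a|) := by rw [← sq_abs]; ring

noncomputable def secondSlope (h : ℝ → E) (x y z : ℝ) : E :=
  (z - x)⁻¹ • (slope h y z - slope h x y)

theorem norm_secondSlope_sub_le {s : Set ℝ} (hs : Convex ℝ s)
    (hh : ∀ u ∈ s, HasDerivAt h (h' u) u) (hh' : ∀ u ∈ s, HasDerivAt h' (h'' u) u) {w : E}
    {C : ℝ} (bound : ∀ u ∈ s, ‖h'' u - w‖ ≤ C) {x y z : ℝ} (hx : x ∈ s) (hz : z ∈ s)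
    (hxy : x < y) (hyz : y < z) : ‖secondSlope h x y z - (2 : ℝ)⁻¹ • w‖ ≤ C := by
  have hy : y ∈ s := hs.ordConnected.out hx hz ⟨hxy.le, hyz.le⟩
  have hzx : 0 < z - x := by linarith
  have key : secondSlope h x y z - (2 : ℝ)⁻¹ • w = (z - x)⁻¹ •
      ((slope h y z - h' y - ((z - y) / 2) • w) - (slope h y x - h' y - ((x - y) / 2) • w)) := by
    rw [secondSlope, slope_comm h x y]
    match_scalars <;> field_simp <;> ring
  rw [key, norm_smul, Real.norm_of_nonneg (inv_nonneg.2 hzx.le), inv_mul_le_iff₀ hzx]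
  calc _ ≤ C * |z - y| + C * |x - y| := norm_sub_le_of_le
        (norm_slope_sub_taylor_le hs hh hh' bound hy hz hyz.ne)
        (norm_slope_sub_taylor_le hs hh hh' bound hy hx hxy.ne')
    _ = (z - x) * C := by
      rw [abs_of_pos (sub_pos.2 hyz), abs_of_neg (sub_neg.2 hxy)]; ring

theorem tendsto_secondSlope (hh : ∀ u, HasDerivAt h (h' u) u)
    (hh' : ∀ u, HasDerivAt h' (h'' u) u) {θ : ℝ} (hc : ContinuousAt h'' θ) {ι : Type*}
    {l : Filter ι} {x y z : ι → ℝ} (hxy : ∀ i, x i < y i) (hyz : ∀ i, y i < z i)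
    (hx : Tendsto x l (𝓝 θ)) (hz : Tendsto z l (𝓝 θ)) :
    Tendsto (fun i => secondSlope h (x i) (y i) (z i)) l (𝓝 ((2 : ℝ)⁻¹ • h'' θ)) := by
  rw [Metric.tendsto_nhds]
  intro ε hε
  obtain ⟨δ, hδ, hδε⟩ := Metric.continuousAt_iff.1 hc (ε / 2) (half_pos hε)
  have bound : ∀ u ∈ Metric.ball θ δ, ‖h'' u - h'' θ‖ ≤ ε / 2 := fun u hu => by
    simpa [dist_eq_norm] using (hδε hu).le
  filter_upwards [hx (Metric.ball_mem_nhds θ hδ), hz (Metric.ball_mem_nhds θ hδ)] with i hxi hzi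
  rw [dist_eq_norm]
  exact (norm_secondSlope_sub_le (convex_ball θ δ) (fun u _ => hh u) (fun u _ => hh' u) bound
    hxi hzi (hxy i) (hyz i)).trans_lt (half_lt_self hε)

end Secant

/-- For `g s = exp (s i)` and `F s = exp (f s i)` these are the parameters `τ` and `σ̄` of the
Möbius map sending `g x, g y, g z` to `F x, F y, F z`. -/
noncomputable def mobiusRatio (g F : ℝ → ℂ) (x y z : ℝ) : ℂ :=
  (g y - g x) / (F y - F x) * ((F z - F y) / (g z - g y))

noncomputable def mobiusConjParam (g F : ℝ → ℂ) (x y z : ℝ) : ℂ :=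
  (mobiusRatio g F x y z - 1) / (g z * mobiusRatio g F x y z - g x)

theorem sub_eq_mul_slope (h : ℝ → ℂ) (a b : ℝ) : h b - h a = (b - a) * slope h a b := by
  rw [← vsub_eq_sub, ← sub_smul_slope h a b, Complex.real_smul, Complex.ofReal_sub]

theorem mobiusRatio_eq {g F : ℝ → ℂ} {x y z : ℝ} (hxy : x ≠ y) (hyz : y ≠ z) :
    mobiusRatio g F x y z = slope g x y * slope F y z / (slope F x y * slope g y z) := by
  have hyx : (y : ℂ) - x ≠ 0 := sub_ne_zero.2 (by exact_mod_cast hxy.symm)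
  have hzy : (z : ℂ) - y ≠ 0 := sub_ne_zero.2 (by exact_mod_cast hyz.symm)
  rw [mobiusRatio, sub_eq_mul_slope g x y, sub_eq_mul_slope F x y, sub_eq_mul_slope F y z,
    sub_eq_mul_slope g y z, mul_div_mul_left _ _ hyx, mul_div_mul_left _ _ hzy, div_mul_div_comm]

noncomputable def mobiusRatioDefect (g F : ℝ → ℂ) (x y z : ℝ) : ℂ :=
  (slope g x y * secondSlope F x y z - slope F x y * secondSlope g x y z) /
    (slope F x y * slope g y z)

theorem mobiusRatio_sub_one {g F : ℝ → ℂ} {x y z : ℝ} (hxz : x ≠ z)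
    (hF : slope F x y ≠ 0) (hg : slope g y z ≠ 0) :
    mobiusRatio g F x y z - 1 = (z - x) * mobiusRatioDefect g F x y z := by
  have hxy : x ≠ y := by rintro rfl; simp at hF
  have hyz : y ≠ z := by rintro rfl; simp at hg
  have hS : ∀ h : ℝ → ℂ, ((z : ℂ) - x) * secondSlope h x y z = slope h y z - slope h x y := by
    intro h
    rw [secondSlope, Complex.real_smul, ← mul_assoc, Complex.ofReal_inv, Complex.ofReal_sub,
      mul_inv_cancel₀ (sub_ne_zero.2 (by exact_mod_cast hxz.symm)), one_mul]
  rw [mobiusRatioDefect, mobiusRatio_eq hxy hyz, div_sub_one (mul_ne_zero hF hg), ← mul_div_assoc]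
  congr 1
  linear_combination slope F x y * hS g - slope g x y * hS F

theorem mobiusConjParam_eq {g F : ℝ → ℂ} {x y z : ℝ} (hxz : x ≠ z)
    (hF : slope F x y ≠ 0) (hg : slope g y z ≠ 0) :
    mobiusConjParam g F x y z = mobiusRatioDefect g F x y z /
      (g z * mobiusRatioDefect g F x y z + slope g x z) := by
  have hzx : (z : ℂ) - x ≠ 0 := sub_ne_zero.2 (by exact_mod_cast hxz.symm)
  have hden : g z * mobiusRatio g F x y z - g x =
      (z - x) * (g z * mobiusRatioDefect g F x y z + slope g x z) := by
    rw [mul_add, mul_left_comm, ← mobiusRatio_sub_one hxz hF hg, ← sub_eq_mul_slope]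
    ring
  rw [mobiusConjParam, hden, mobiusRatio_sub_one hxz hF hg, mul_div_mul_left _ _ hzx]

theorem tendsto_mobiusConjParam {g g' g'' F F' F'' : ℝ → ℂ} (hg : ∀ s, HasDerivAt g (g' s) s)
    (hg' : ∀ s, HasDerivAt g' (g'' s) s) (hF : ∀ s, HasDerivAt F (F' s) s)
    (hF' : ∀ s, HasDerivAt F' (F'' s) s) {θ : ℝ} (hgc : ContinuousAt g'' θ)
    (hFc : ContinuousAt F'' θ) (hg0 : g' θ ≠ 0) (hF0 : F' θ ≠ 0) (L : ℂ)
    (hL : L = (g' θ * F'' θ - F' θ * g'' θ) / (2 * (F' θ * g' θ))) (hden : g θ * L + g' θ ≠ 0)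
    {ι : Type*} {l : Filter ι} {x y z : ι → ℝ} (hxy : ∀ i, x i < y i) (hyz : ∀ i, y i < z i)
    (hx : Tendsto x l (𝓝 θ)) (hz : Tendsto z l (𝓝 θ)) :
    Tendsto (fun i => mobiusConjParam g F (x i) (y i) (z i)) l (𝓝 (L / (g θ * L + g' θ))) := by
  have hy : Tendsto y l (𝓝 θ) := tendsto_of_tendsto_of_tendsto_of_le_of_le hx hz
    (fun i => (hxy i).le) (fun i => (hyz i).le)
  have hxz : ∀ i, x i < z i := fun i => (hxy i).trans (hyz i)
  have hgc' := (hg' θ).continuousAt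
  have hgxy := tendsto_slope_of_continuousAt_deriv hg hgc' (fun i => (hxy i).ne) hx hy
  have hgyz := tendsto_slope_of_continuousAt_deriv hg hgc' (fun i => (hyz i).ne) hy hz
  have hgxz := tendsto_slope_of_continuousAt_deriv hg hgc' (fun i => (hxz i).ne) hx hz
  have hFxy := tendsto_slope_of_continuousAt_deriv hF (hF' θ).continuousAt
    (fun i => (hxy i).ne) hx hy
  have hD : Tendsto (fun i => mobiusRatioDefect g F (x i) (y i) (z i)) l (𝓝 L) := by
    have hL' : L = (g' θ * (2 : ℝ)⁻¹ • F'' θ - F' θ * (2 : ℝ)⁻¹ • g'' θ) / (F' θ * g' θ) := by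
      rw [hL, Complex.real_smul, Complex.real_smul]
      push_cast
      ring
    rw [hL']
    exact ((hgxy.mul (tendsto_secondSlope hF hF' hFc hxy hyz hx hz)).sub
      (hFxy.mul (tendsto_secondSlope hg hg' hgc hxy hyz hx hz))).div
      (hFxy.mul hgyz) (mul_ne_zero hF0 hg0)
  have hgz : Tendsto (fun i => g (z i)) l (𝓝 (g θ)) := (hg θ).continuousAt.tendsto.comp hz
  refine (hD.div ((hgz.mul hD).add hgxz) hden).congr' ?_
  -- `F (x i) ≠ F (y i)` and `g (y i) ≠ g (z i)` hold eventually because the slopes tend to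
  -- nonzero limits
  filter_upwards [hFxy.eventually_ne hF0, hgyz.eventually_ne hg0] with i hFi hgi
  exact (mobiusConjParam_eq (hxz i).ne hFi hgi).symm

open Complex

theorem hasDerivAt_cexp_ofReal_mul_I {φ : ℝ → ℝ} {φ' x : ℝ} (hφ : HasDerivAt φ φ' x) :
    HasDerivAt (fun s => exp (φ s * I)) (φ' * I * exp (φ x * I)) x := by
  simpa only [mul_comm] using (hφ.ofReal_comp.mul_const I).cexp

theorem hasDerivAt_deriv_cexp_ofReal_mul_I {φ φ' : ℝ → ℝ} {φ'' x : ℝ}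
    (hφ : HasDerivAt φ (φ' x) x) (hφ' : HasDerivAt φ' φ'' x) :
    HasDerivAt (fun s => φ' s * I * exp (φ s * I))
      ((φ'' * I + (φ' x * I) ^ 2) * exp (φ x * I)) x := by
  refine ((hφ'.ofReal_comp.mul_const I).mul (hasDerivAt_cexp_ofReal_mul_I hφ)).congr_deriv ?_
  ring

/-- `L` is the limit of `mobiusRatioDefect` for `g s = exp (s i)` and `F s = exp (f s i)`, with
`a = g θ`, `A = F θ`, `p = f' θ`, `q = f'' θ`. -/
theorem circle_mobiusLimit (a A : ℂ) (ha : ‖a‖ = 1) (hA : A ≠ 0) {p q : ℝ} (hp : 0 < p) (L : ℂ)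
    (hL : L = (I * a * ((q * I + (p * I) ^ 2) * A) - p * I * A * -a) /
      (2 * (p * I * A * (I * a)))) :
    a * L + I * a ≠ 0 ∧ ‖L / (a * L + I * a)‖ =
      √((p ^ 2 * (p - 1) ^ 2 + q ^ 2) / (p ^ 2 * (p + 1) ^ 2 + q ^ 2)) := by
  have ha0 : a ≠ 0 := norm_ne_zero_iff.1 (by simp [ha])
  have hp0 : (p : ℂ) ≠ 0 := by exact_mod_cast hp.ne'
  have hL' : L = (q + (p * (p - 1) : ℝ) * I) / (2 * p) := by
    rw [hL, div_eq_div_iff (by simp [hp0, hA, ha0]) (by simp [hp0])]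
    push_cast
    linear_combination (2 * p ^ 2 * a * A * I) * I_sq
  have hden : a * L + I * a = a * ((q + (p * (p + 1) : ℝ) * I) / (2 * p)) := by
    rw [hL']
    push_cast
    field_simp
    ring
  have hv : (q : ℂ) + (p * (p + 1) : ℝ) * I ≠ 0 := fun h => by
    have := congrArg im h
    simp only [add_im, ofReal_im, mul_im, ofReal_re, I_re, I_im, mul_zero, mul_one, zero_add,
      add_zero, zero_im] at this
    nlinarith
  refine ⟨hden ▸ mul_ne_zero ha0 (div_ne_zero hv (mul_ne_zero two_ne_zero hp0)), ?_⟩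
  rw [hden, hL', norm_div, norm_mul, ha, one_mul, norm_div, norm_div,
    div_div_div_cancel_right₀ (by simpa using hp0), norm_add_mul_I, norm_add_mul_I,
    ← Real.sqrt_div (by positivity)]
  congr 1
  ring

theorem enlarged_cocycle_diagonal_general (f : ℝ → ℝ) (hf : ContDiff ℝ 2 f)
    (hf' : ∀ x, 0 < deriv f x)
    (θ : ℝ) (t₁ t₂ t₃ : ℕ → ℝ)
    (hord : ∀ n, t₁ n < t₂ n ∧ t₂ n < t₃ n)
    (h1 : Tendsto t₁ atTop (nhds θ))
    (h3 : Tendsto t₃ atTop (nhds θ))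
    (τ σ : ℕ → ℂ)
    (hτ : ∀ n, τ n =
      (Complex.exp (t₂ n * Complex.I) - Complex.exp (t₁ n * Complex.I)) /
        (Complex.exp (f (t₂ n) * Complex.I) - Complex.exp (f (t₁ n) * Complex.I)) *
      ((Complex.exp (f (t₃ n) * Complex.I) - Complex.exp (f (t₂ n) * Complex.I)) /
        (Complex.exp (t₃ n * Complex.I) - Complex.exp (t₂ n * Complex.I))))
    (hσ : ∀ n, (starRingEnd ℂ) (σ n) =
      (τ n - 1) / (Complex.exp (t₃ n * Complex.I) * τ n - Complex.exp (t₁ n * Complex.I))) :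
    Tendsto (fun n => ‖σ n‖) atTop
      (nhds (Real.sqrt
        ((deriv f θ ^ 2 * (deriv f θ - 1) ^ 2 + deriv (deriv f) θ ^ 2) /
          (deriv f θ ^ 2 * (deriv f θ + 1) ^ 2 + deriv (deriv f) θ ^ 2)))) := by
  have hd1 : ∀ x, HasDerivAt f (deriv f x) x := fun x =>
    (hf.differentiable (by norm_num) x).hasDerivAt
  have hf1 : ContDiff ℝ 1 (deriv f) := hf.deriv'
  have hd2 : ∀ x, HasDerivAt (deriv f) (deriv (deriv f) x) x := fun x =>
    (hf1.differentiable one_ne_zero x).hasDerivAt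
  have hg : ∀ s : ℝ, HasDerivAt (fun s : ℝ => exp (s * I)) (I * exp (s * I)) s := fun s => by
    simpa using hasDerivAt_cexp_ofReal_mul_I (hasDerivAt_id s)
  have hg' : ∀ s : ℝ, HasDerivAt (fun s : ℝ => I * exp (s * I)) (-exp (s * I)) s := fun s =>
    ((hg s).const_mul I).congr_deriv (by rw [← mul_assoc, I_mul_I, neg_one_mul])
  have hFc : Continuous fun s =>
      (deriv (deriv f) s * I + (deriv f s * I) ^ 2) * exp (f s * I) := by
    have := continuous_ofReal.comp hf.continuous
    have := continuous_ofReal.comp hf1.continuous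
    have := continuous_ofReal.comp (hf1.continuous_deriv le_rfl)
    fun_prop
  obtain ⟨hden, hnorm⟩ := circle_mobiusLimit (exp (θ * I)) (exp (f θ * I)) (norm_exp_ofReal_mul_I θ)
    (exp_ne_zero _) (hf' θ) _ rfl
  have hlim := tendsto_mobiusConjParam hg hg' (fun s => hasDerivAt_cexp_ofReal_mul_I (hd1 s))
    (fun s => hasDerivAt_deriv_cexp_ofReal_mul_I (hd1 s) (hd2 s)) (by fun_prop)
    hFc.continuousAt (by simp) (by simp [(hf' θ).ne']) _ rfl hden (fun n => (hord n).1)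
    (fun n => (hord n).2) h1 h3
  rw [← hnorm]
  refine ((continuous_norm.tendsto _).comp hlim).congr fun n => ?_
  rw [Function.comp_apply, ← norm_conj (σ n), hσ, hτ]
  rfl

/-- continuity of the enlarged projective cocycle on the diagonal: as three
distinct cyclically ordered points converge to `θ`, the modulus of the parameter
`σ_{(θ₁,θ₂,θ₃)}` (where `σ̄ = (τ-1)/(cτ-a)`) of the interpolating Möbius map converges to
`sqrt((Df(θ)²(Df(θ)-1)² + D²f(θ)²)/(Df(θ)²(Df(θ)+1)² + D²f(θ)²))`. -/
theorem enlarged_cocycle_diagonal (f : ℝ → ℝ) (hf : ContDiff ℝ 2 f)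
    (hf' : ∀ x, 0 < deriv f x)
    (hper : ∀ x, f (x + 2 * Real.pi) = f x + 2 * Real.pi)
    (θ : ℝ) (t₁ t₂ t₃ : ℕ → ℝ)
    (hord : ∀ n, t₁ n < t₂ n ∧ t₂ n < t₃ n) (hsp : ∀ n, t₃ n - t₁ n < 2 * Real.pi)
    (h1 : Tendsto t₁ atTop (nhds θ)) (h2 : Tendsto t₂ atTop (nhds θ))
    (h3 : Tendsto t₃ atTop (nhds θ))
    (τ σ : ℕ → ℂ)
    (hτ : ∀ n, τ n =
      (Complex.exp (t₂ n * Complex.I) - Complex.exp (t₁ n * Complex.I)) /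
        (Complex.exp (f (t₂ n) * Complex.I) - Complex.exp (f (t₁ n) * Complex.I)) *
      ((Complex.exp (f (t₃ n) * Complex.I) - Complex.exp (f (t₂ n) * Complex.I)) /
        (Complex.exp (t₃ n * Complex.I) - Complex.exp (t₂ n * Complex.I))))
    (hσ : ∀ n, (starRingEnd ℂ) (σ n) =
      (τ n - 1) / (Complex.exp (t₃ n * Complex.I) * τ n - Complex.exp (t₁ n * Complex.I))) :
    Tendsto (fun n => ‖σ n‖) atTop
      (nhds (Real.sqrt
        ((deriv f θ ^ 2 * (deriv f θ - 1) ^ 2 + deriv (deriv f) θ ^ 2) /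
          (deriv f θ ^ 2 * (deriv f θ + 1) ^ 2 + deriv (deriv f) θ ^ 2)))) :=
  enlarged_cocycle_diagonal_general f hf hf' θ t₁ t₂ t₃ hord h1 h3 τ σ hτ hσ
end
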